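/- Let ι and κ be finite nonempty index types and let ρ : Matrix (ι × κ) (ι × κ) ℂ be a positive definite Hermitian matrix with Matrix.trace ρ = 1, whose marginals ρ_A := ptr₂ ρ and ρ_B := ptr₁ ρ are positive definite. Then the relative entropy between ρ and the product of its own marginals equals the mutual information: S(ρ ‖ ρ_A ⊗ₖ ρ_B) = S(ρ_A) + S(ρ_B) − S(ρ). -/

import Mathlib

open Matrix Kronecker
open scoped ComplexOrder

/-- `matLog ρ` is `Real.log` applied to a Hermitian matrix `ρ` through the
continuous functional calculus (`Matrix.IsHermitian.cfc`); junk value `0` on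
non-Hermitian matrices. -/
noncomputable def matLog {n : Type*} [Fintype n] [DecidableEq n]
    (ρ : Matrix n n ℂ) : Matrix n n ℂ :=
  if h : ρ.IsHermitian then h.cfc Real.log else 0

/-- The von Neumann entropy `S(ρ) = -Re (tr (ρ log ρ))`. -/
noncomputable def vnEntropy {n : Type*} [Fintype n] [DecidableEq n]
    (ρ : Matrix n n ℂ) : ℝ :=
  -(Matrix.trace (ρ * matLog ρ)).re

/-- The quantum relative entropy `S(ρ‖σ) = Re (tr (ρ (log ρ - log σ)))`. -/
noncomputable def relEnt {n : Type*} [Fintype n] [DecidableEq n]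
    (ρ σ : Matrix n n ℂ) : ℝ :=
  (Matrix.trace (ρ * (matLog ρ - matLog σ))).re

/-- Partial trace over the second tensor factor. -/
noncomputable def ptr₂ {ι κ : Type*} [Fintype κ]
    (M : Matrix (ι × κ) (ι × κ) ℂ) : Matrix ι ι ℂ :=
  Matrix.of fun i i' => ∑ k, M (i, k) (i', k)

/-- Partial trace over the first tensor factor. -/
noncomputable def ptr₁ {ι κ : Type*} [Fintype ι]
    (M : Matrix (ι × κ) (ι × κ) ℂ) : Matrix κ κ ℂ :=
  Matrix.of fun k k' => ∑ i, M (i, k) (i, k')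

/-!
The logarithm turns the Kronecker product of positive definite matrices into a sum:
`A ⊗ₖ B = exp (log A ⊗ₖ 1 + 1 ⊗ₖ log B)` because the two summands commute, and `log` inverts
`exp` on self-adjoint matrices. Pairing `ρ` with `log A ⊗ₖ 1` under the trace is pairing its
marginal `ptr₂ ρ` with `log A`, and likewise on the second factor, so the cross term
`tr (ρ log (ρ_A ⊗ₖ ρ_B))` splits into the entropies of the two marginals.
-/

namespace Matrix

lemma IsHermitian.kronecker {ι κ α : Type*} [CommMagma α] [StarMul α] {A : Matrix ι ι α}
    {B : Matrix κ κ α} (hA : A.IsHermitian) (hB : B.IsHermitian) : (A ⊗ₖ B).IsHermitian := by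
  rw [IsHermitian, conjTranspose_kronecker, hA, hB]

variable {ι κ : Type*} [Fintype ι] [Fintype κ] [DecidableEq ι] [DecidableEq κ]

def kroneckerOneAlgHom (R : Type*) [CommSemiring R] :
    Matrix ι ι R →ₐ[R] Matrix (ι × κ) (ι × κ) R where
  toFun X := X ⊗ₖ 1
  map_one' := one_kronecker_one
  map_mul' X Y := by rw [← mul_kronecker_mul, mul_one]
  map_zero' := zero_kronecker _
  map_add' := (add_kronecker · · _)
  commutes' r := by simp [algebraMap_eq_diagonal, ← diagonal_one, diagonal_kronecker_diagonal]

def oneKroneckerAlgHom (R : Type*) [CommSemiring R] :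
    Matrix κ κ R →ₐ[R] Matrix (ι × κ) (ι × κ) R where
  toFun Y := 1 ⊗ₖ Y
  map_one' := one_kronecker_one
  map_mul' X Y := by rw [← mul_kronecker_mul, mul_one]
  map_zero' := kronecker_zero _
  map_add' := (kronecker_add _ · ·)
  commutes' r := by simp [algebraMap_eq_diagonal, ← diagonal_one, diagonal_kronecker_diagonal]

lemma commute_kronecker_one_one_kronecker {R : Type*} [CommSemiring R]
    (X : Matrix ι ι R) (Y : Matrix κ κ R) :
    Commute (X ⊗ₖ (1 : Matrix κ κ R)) ((1 : Matrix ι ι R) ⊗ₖ Y) := by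
  simp only [Commute, SemiconjBy, ← mul_kronecker_mul, mul_one, one_mul]

-- Any matrix norm would do: `exp` and `CFC.log` only depend on the (product) topology.
-- `NormedSpace.map_exp` would need a `NormedAlgebra ℚ` instance, hence the ball version over `ℂ`.
open scoped Matrix.Norms.L2Operator

lemma exp_kronecker_one (X : Matrix ι ι ℂ) :
    NormedSpace.exp (X ⊗ₖ (1 : Matrix κ κ ℂ)) = NormedSpace.exp X ⊗ₖ 1 :=
  (NormedSpace.map_exp_of_mem_ball (𝕂 := ℂ) (kroneckerOneAlgHom (κ := κ) ℂ)
    (by exact (kroneckerOneAlgHom (κ := κ) ℂ).toLinearMap.continuous_of_finiteDimensional) X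
    (by simp [NormedSpace.expSeries_radius_eq_top])).symm

lemma exp_one_kronecker (Y : Matrix κ κ ℂ) :
    NormedSpace.exp ((1 : Matrix ι ι ℂ) ⊗ₖ Y) = 1 ⊗ₖ NormedSpace.exp Y :=
  (NormedSpace.map_exp_of_mem_ball (𝕂 := ℂ) (oneKroneckerAlgHom (ι := ι) ℂ)
    (by exact (oneKroneckerAlgHom (ι := ι) ℂ).toLinearMap.continuous_of_finiteDimensional) Y
    (by simp [NormedSpace.expSeries_radius_eq_top])).symm

lemma exp_kronecker_one_add_one_kronecker (X : Matrix ι ι ℂ) (Y : Matrix κ κ ℂ) :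
    NormedSpace.exp (X ⊗ₖ 1 + 1 ⊗ₖ Y) = NormedSpace.exp X ⊗ₖ NormedSpace.exp Y := by
  rw [exp_add_of_commute _ _ (commute_kronecker_one_one_kronecker X Y), exp_kronecker_one,
    exp_one_kronecker, ← mul_kronecker_mul, mul_one, one_mul]

open scoped MatrixOrder in
lemma log_kronecker {A : Matrix ι ι ℂ} {B : Matrix κ κ ℂ} (hA : A.PosDef) (hB : B.PosDef) :
    CFC.log (A ⊗ₖ B) = CFC.log A ⊗ₖ 1 + 1 ⊗ₖ CFC.log B := by
  conv_lhs => rw [← CFC.exp_log A hA.isStrictlyPositive, ← CFC.exp_log B hB.isStrictlyPositive,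
    ← exp_kronecker_one_add_one_kronecker]
  refine CFC.log_exp _ (IsSelfAdjoint.add ?_ ?_)
  · exact IsSelfAdjoint.log.isHermitian.kronecker isHermitian_one
  · exact isHermitian_one.kronecker IsSelfAdjoint.log.isHermitian

end Matrix

section

open scoped Matrix.Norms.L2Operator

lemma matLog_eq_log {n : Type*} [Fintype n] [DecidableEq n] {A : Matrix n n ℂ}
    (hA : A.IsHermitian) : matLog A = CFC.log A := by
  rw [matLog, dif_pos hA, CFC.log, hA.cfc_eq]

variable {ι κ : Type*} [Fintype ι] [Fintype κ]

lemma matLog_kronecker [DecidableEq ι] [DecidableEq κ] {A : Matrix ι ι ℂ} {B : Matrix κ κ ℂ}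
    (hA : A.PosDef) (hB : B.PosDef) : matLog (A ⊗ₖ B) = matLog A ⊗ₖ 1 + 1 ⊗ₖ matLog B := by
  rw [matLog_eq_log (hA.kronecker hB).isHermitian, matLog_eq_log hA.isHermitian,
    matLog_eq_log hB.isHermitian, log_kronecker hA hB]

lemma trace_mul_kronecker_one [DecidableEq κ] (ρ : Matrix (ι × κ) (ι × κ) ℂ)
    (X : Matrix ι ι ℂ) : trace (ρ * (X ⊗ₖ (1 : Matrix κ κ ℂ))) = trace (ptr₂ ρ * X) := by
  simp only [trace, diag, mul_apply, Fintype.sum_prod_type, kroneckerMap_apply, one_apply,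
    mul_ite, mul_one, mul_zero, Finset.sum_ite_eq', Finset.mem_univ, if_true, ptr₂, of_apply,
    Finset.sum_mul]
  exact Finset.sum_congr rfl fun i _ => Finset.sum_comm

lemma trace_mul_one_kronecker [DecidableEq ι] (ρ : Matrix (ι × κ) (ι × κ) ℂ)
    (Y : Matrix κ κ ℂ) : trace (ρ * ((1 : Matrix ι ι ℂ) ⊗ₖ Y)) = trace (ptr₁ ρ * Y) := by
  simp only [trace, diag, mul_apply, Fintype.sum_prod_type, kroneckerMap_apply, one_apply,
    ite_mul, one_mul, zero_mul, mul_ite, mul_zero, Finset.sum_ite_irrel, Finset.sum_const_zero,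
    Finset.sum_ite_eq', Finset.mem_univ, if_true, ptr₁, of_apply, Finset.sum_mul]
  rw [Finset.sum_comm]
  exact Finset.sum_congr rfl fun k _ => Finset.sum_comm

end

theorem relEnt_to_own_marginals_general {ι κ : Type*} [Fintype ι] [Fintype κ]
    [DecidableEq ι] [DecidableEq κ]
    (ρ : Matrix (ι × κ) (ι × κ) ℂ)
    (hA : (ptr₂ ρ).PosDef) (hB : (ptr₁ ρ).PosDef) :
    relEnt ρ (ptr₂ ρ ⊗ₖ ptr₁ ρ) =
      vnEntropy (ptr₂ ρ) + vnEntropy (ptr₁ ρ) - vnEntropy ρ := by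
  rw [relEnt, matLog_kronecker hA hB, mul_sub, mul_add, trace_sub, trace_add,
    trace_mul_kronecker_one, trace_mul_one_kronecker, vnEntropy, vnEntropy, vnEntropy,
    Complex.sub_re, Complex.add_re]
  ring

/-- The relative entropy between a state and the product of its own marginals
equals the mutual information: `S(ρ ‖ ρ_A ⊗ₖ ρ_B) = S(ρ_A) + S(ρ_B) - S(ρ)`. -/
theorem relEnt_to_own_marginals {ι κ : Type*} [Fintype ι] [Fintype κ]
    [DecidableEq ι] [DecidableEq κ] [Nonempty ι] [Nonempty κ]
    (ρ : Matrix (ι × κ) (ι × κ) ℂ) (hρ : ρ.PosDef)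
    (hρ1 : Matrix.trace ρ = 1)
    (hA : (ptr₂ ρ).PosDef) (hB : (ptr₁ ρ).PosDef) :
    relEnt ρ (ptr₂ ρ ⊗ₖ ptr₁ ρ) =
      vnEntropy (ptr₂ ρ) + vnEntropy (ptr₁ ρ) - vnEntropy ρ :=
  relEnt_to_own_marginals_general ρ hA hB
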